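/- arXiv:2208.07545 — 5 statements merged into one kernel-verified Lean document; each statement's English description precedes it below -/
import Mathlib

section
/- The associahedron K(n) (defined as above) is a compact convex subset of ℝⁿ of dimension n−2 for n ≥ 2; in particular K(2) is a point. -/
/-- The associahedron `K(n)` (indexed by `Fin n`, `0`-based). -/
def assocK (n : ℕ) : Set (Fin n → ℝ) :=
  {t | (∀ i, 0 ≤ t i) ∧ (∀ i : Fin n, ∑ j ∈ Finset.Iic i, t j ≤ (i : ℕ)) ∧
    ∑ i, t i = (n : ℝ) - 1}

/-!
`K(n)` is cut out by finitely many closed half-spaces and a hyperplane and sits in the box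
`[0, n]ⁿ`, so it is compact and convex. The constraint for `i = 1` forces `t₁ = 0`, so `K(n)`
lies in the affine subspace `t₁ = 0, t₁ + ⋯ + tₙ = n - 1`, on whose direction forgetting the
first and last coordinate is injective; hence `dim K(n) ≤ n - 2`. Conversely `(0, 1, …, 1)`
lies in `K(n)`, and moving its unit mass from a coordinate `j ≠ 1` to the last one stays in
`K(n)`, so every `e_j - e_n` is a direction of `K(n)`; these already map onto `ℝⁿ⁻²`.
Finally `K(2)` is nonempty of dimension `0`, hence a point.
-/

open Finset

theorem isLinearMap_sum_apply {R ι : Type*} [Semiring R] (s : Finset ι) :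
    IsLinearMap R fun t : ι → R => ∑ j ∈ s, t j :=
  ⟨fun _ _ => sum_add_distrib, fun c x => (mul_sum s x c).symm⟩

theorem continuous_sum_apply {M ι : Type*} [TopologicalSpace M] [AddCommMonoid M]
    [ContinuousAdd M] (s : Finset ι) : Continuous fun t : ι → M => ∑ j ∈ s, t j :=
  continuous_finsetSum s fun j _ => continuous_apply j

theorem vectorSpan_le_ker_of_forall_apply_eq {k V W : Type*} [Ring k] [AddCommGroup V]
    [Module k V] [AddCommGroup W] [Module k W] {s : Set V} (f : V →ₗ[k] W) {c : W}
    (hf : ∀ x ∈ s, f x = c) : vectorSpan k s ≤ LinearMap.ker f := by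
  rw [vectorSpan_def, Submodule.span_le]
  rintro _ ⟨x, hx, y, hy, rfl⟩
  simp [hf x hx, hf y hy]

section

variable {m : ℕ}

theorem assocK_eq_inter :
    assocK m = (⋂ i, {t | 0 ≤ t i}) ∩
      ((⋂ i : Fin m, {t | ∑ j ∈ Iic i, t j ≤ ((i : ℕ) : ℝ)}) ∩ {t | ∑ i, t i = (m : ℝ) - 1}) := by
  ext t
  simp [assocK]

theorem convex_assocK : Convex ℝ (assocK m) := by
  rw [assocK_eq_inter]
  exact (convex_iInter fun i => convex_halfSpace_ge (LinearMap.proj i).isLinear 0).inter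
    ((convex_iInter fun i => convex_halfSpace_le (isLinearMap_sum_apply _) _).inter
      (convex_hyperplane (isLinearMap_sum_apply _) _))

theorem isClosed_assocK : IsClosed (assocK m) := by
  rw [assocK_eq_inter]
  exact (isClosed_iInter fun i => isClosed_le continuous_const (continuous_apply i)).inter
    ((isClosed_iInter fun i => isClosed_le (continuous_sum_apply _) continuous_const).inter
      (isClosed_eq (continuous_sum_apply _) continuous_const))

theorem assocK_subset_Icc : assocK m ⊆ Set.Icc 0 fun _ => (m : ℝ) := by
  rintro t ⟨ht_nonneg, -, ht_sum⟩
  refine ⟨ht_nonneg, fun i => ?_⟩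
  calc t i ≤ ∑ j, t j := single_le_sum (fun j _ => ht_nonneg j) (mem_univ i)
    _ ≤ m := by rw [ht_sum]; linarith

theorem isCompact_assocK : IsCompact (assocK m) :=
  isCompact_Icc.of_isClosed_subset isClosed_assocK assocK_subset_Icc

theorem apply_zero_of_mem_assocK {t : Fin (m + 1) → ℝ} (ht : t ∈ assocK (m + 1)) : t 0 = 0 := by
  have h := ht.2.1 0
  rw [show Iic (0 : Fin (m + 1)) = {0} from Iic_bot, sum_singleton] at h
  exact le_antisymm (by simpa using h) (ht.1 0)

theorem one_sub_single_zero_mem_assocK :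
    (1 - Pi.single 0 1 : Fin (m + 1) → ℝ) ∈ assocK (m + 1) := by
  refine ⟨fun i => ?_, fun i => ?_, ?_⟩
  · by_cases hi : i = 0 <;> simp [hi]
  · simp [sum_sub_distrib, sum_pi_single']
  · simp [sum_sub_distrib, sum_pi_single']

theorem add_single_last_sub_single_mem_assocK {t : Fin (m + 1) → ℝ} (ht : t ∈ assocK (m + 1))
    (j : Fin (m + 1)) {c : ℝ} (hc : 0 ≤ c) (hcj : c ≤ t j) :
    t + Pi.single (Fin.last m) c - Pi.single j c ∈ assocK (m + 1) := by
  obtain ⟨ht_nonneg, ht_prefix, ht_sum⟩ := ht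
  refine ⟨fun i => ?_, fun i => ?_, ?_⟩
  · have hi := ht_nonneg i
    simp only [Pi.add_apply, Pi.sub_apply, Pi.single_apply]
    split_ifs <;> subst_vars <;> linarith
  · have h := ht_prefix i
    simp only [Pi.add_apply, Pi.sub_apply, sum_sub_distrib, sum_add_distrib, sum_pi_single',
      mem_Iic]
    by_cases hl : Fin.last m ≤ i
    · simp [hl, (Fin.le_last j).trans hl, h]
    · simp only [hl, if_false]
      split_ifs <;> linarith
  · simp [sum_sub_distrib, sum_add_distrib, sum_pi_single', ht_sum]

theorem apply_zero_and_sum_of_mem_vectorSpan_assocK {v : Fin (m + 1) → ℝ}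
    (hv : v ∈ vectorSpan ℝ (assocK (m + 1))) : v 0 = 0 ∧ ∑ i, v i = 0 := by
  refine ⟨vectorSpan_le_ker_of_forall_apply_eq (LinearMap.proj (R := ℝ) (φ := fun _ => ℝ) 0)
    (fun _ ht => apply_zero_of_mem_assocK ht) hv, ?_⟩
  simpa [LinearMap.sum_apply] using
    vectorSpan_le_ker_of_forall_apply_eq (∑ i, LinearMap.proj (R := ℝ) (φ := fun _ => ℝ) i)
      (fun _ ht => by simpa [LinearMap.sum_apply] using ht.2.2) hv

theorem single_sub_single_last_mem_vectorSpan_assocK {j : Fin (m + 1)} (hj : j ≠ 0) :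
    (Pi.single j 1 - Pi.single (Fin.last m) 1 : Fin (m + 1) → ℝ) ∈
      vectorSpan ℝ (assocK (m + 1)) := by
  have hq := one_sub_single_zero_mem_assocK (m := m)
  have hq' := add_single_last_sub_single_mem_assocK hq j zero_le_one (by simp [hj])
  convert vsub_mem_vectorSpan ℝ hq hq' using 1
  rw [vsub_eq_sub]
  abel

end

theorem finrank_vectorSpan_assocK (n : ℕ) :
    Module.finrank ℝ (vectorSpan ℝ (assocK (n + 2))) = n := by
  set V := vectorSpan ℝ (assocK (n + 2))
  let π : V →ₗ[ℝ] Fin n → ℝ :=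
    LinearMap.funLeft ℝ ℝ (fun k : Fin n => k.castSucc.succ) ∘ₗ V.subtype
  have hinj : Function.Injective π := by
    rw [← LinearMap.ker_eq_bot, LinearMap.ker_eq_bot']
    rintro ⟨v, hv⟩ hπv
    obtain ⟨h0, hsum⟩ := apply_zero_and_sum_of_mem_vectorSpan_assocK hv
    have hmid : ∀ k : Fin n, v k.castSucc.succ = 0 := fun k => congrFun hπv k
    have hlast : v (Fin.last (n + 1)) = 0 := by
      rw [Fin.sum_univ_succ, Fin.sum_univ_castSucc] at hsum
      simpa [h0, hmid] using hsum
    ext i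
    induction i using Fin.cases with
    | zero => exact h0
    | succ j =>
      induction j using Fin.lastCases with
      | last => exact hlast
      | cast k => exact hmid k
  have hsurj : Function.Surjective π := by
    intro w
    refine ⟨⟨∑ k, w k • (Pi.single k.castSucc.succ 1 - Pi.single (Fin.last (n + 1)) 1),
      sum_mem fun k _ => V.smul_mem (w k)
        (single_sub_single_last_mem_vectorSpan_assocK (Fin.succ_ne_zero _))⟩, ?_⟩
    funext k
    simp [π, Pi.single_apply]
  exact (LinearEquiv.ofBijective π ⟨hinj, hsurj⟩).finrank_eq.trans (Module.finrank_fin_fun ℝ)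

/-- for every `n ≥ 2` (written `n + 2`), the associahedron `K(n)` is a
compact convex subset of `ℝⁿ` whose affine hull has dimension `n − 2`;
in particular `K(2)` is a single point. -/
theorem assocK_compact_convex_dim :
    (∀ n : ℕ, IsCompact (assocK (n + 2)) ∧ Convex ℝ (assocK (n + 2)) ∧
      Module.finrank ℝ (vectorSpan ℝ (assocK (n + 2))) = n) ∧
    ∃ p : Fin 2 → ℝ, assocK 2 = {p} := by
  have hK2 : (assocK 2).Subsingleton := (vectorSpan_eq_bot_iff_subsingleton ℝ).1 <|
    Submodule.finrank_eq_zero.1 (finrank_vectorSpan_assocK 0)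
  exact ⟨fun n => ⟨isCompact_assocK, convex_assocK, finrank_vectorSpan_assocK n⟩, _,
    hK2.eq_singleton_of_mem one_sub_single_zero_mem_assocK⟩
end

section
/- For any path-connected space X, cat(X) ≤ tc(X) ≤ cat(X × X); in particular tc(X) ≤ 2·cat(X) when cat satisfies the product inequality. -/
/-!
A motion planner on `U ⊆ X × X` restricts, on the slice `{x₀} × X`, to a continuous choice of
paths from `x₀`, i.e. a contraction of the slice. Conversely, a contraction of `U` to a point
`(c₁, c₂)` moves each `(a, b) ∈ U` along paths `a ⇝ c₁` and `b ⇝ c₂`; concatenating the first,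
a fixed path `c₁ ⇝ c₂`, and the reverse of the second gives a motion planner on `U`.
-/

open scoped unitInterval

/-- A subset `U ⊆ X` is categorical if the inclusion `U ↪ X` is null-homotopic. -/
def catSet {X : Type*} [TopologicalSpace X] (U : Set X) : Prop :=
  ContinuousMap.Nullhomotopic (⟨Subtype.val, continuous_subtype_val⟩ : C(U, X))

/-- The normalized Lusternik–Schnirelmann category. -/
noncomputable def LScat (X : Type*) [TopologicalSpace X] : ℕ∞ :=
  sInf {n : ℕ∞ | ∃ m : ℕ, n = m ∧ ∃ U : Fin (m + 1) → Set X,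
    (∀ i, IsOpen (U i)) ∧ (⋃ i, U i) = Set.univ ∧ ∀ i, catSet (U i)}

/-- The normalized topological complexity. -/
noncomputable def topC (X : Type*) [TopologicalSpace X] : ℕ∞ :=
  sInf {n : ℕ∞ | ∃ m : ℕ, n = m ∧ ∃ U : Fin (m + 1) → Set (X × X),
    (∀ i, IsOpen (U i)) ∧ (⋃ i, U i) = Set.univ ∧
    ∀ i, ∃ s : C(U i, C(I, X)), ∀ u : U i, ((s u) 0, (s u) 1) = (u : X × X)}

section

variable {X : Type*} [TopologicalSpace X]

theorem catSet_iff_exists_paths {U : Set X} :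
    catSet U ↔ ∃ c : X, ∃ γ : ∀ u : U, Path (u : X) c, Continuous ↿γ := by
  constructor
  · rintro ⟨c, ⟨H⟩⟩
    refine ⟨c, fun u => ⟨⟨fun t => H (t, u), by fun_prop⟩, by simp, by simp⟩, ?_⟩
    exact H.continuous.comp continuous_swap
  · rintro ⟨c, γ, hγ⟩
    exact ⟨c, ⟨⟨⟨fun q => γ q.2 q.1, hγ.comp continuous_swap⟩, fun u => (γ u).source,
      fun u => (γ u).target⟩⟩⟩

theorem exists_section_iff_exists_paths {U : Set (X × X)} :
    (∃ s : C(U, C(I, X)), ∀ u : U, ((s u) 0, (s u) 1) = (u : X × X)) ↔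
      ∃ γ : ∀ u : U, Path (u : X × X).1 (u : X × X).2, Continuous ↿γ := by
  constructor
  · rintro ⟨s, hs⟩
    refine ⟨fun u => ⟨s u, congrArg Prod.fst (hs u), congrArg Prod.snd (hs u)⟩, ?_⟩
    exact ContinuousEval.continuous_eval.comp (s.continuous.prodMap continuous_id)
  · rintro ⟨γ, hγ⟩
    exact ⟨⟨fun u => (γ u).toContinuousMap, ContinuousMap.continuous_of_continuous_uncurry _ hγ⟩,
      fun u => Prod.ext (γ u).source (γ u).target⟩

theorem catSet_slice_of_paths {U : Set (X × X)} (x₀ : X)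
    {γ : ∀ u : U, Path (u : X × X).1 (u : X × X).2} (hγ : Continuous ↿γ) :
    catSet ((x₀, ·) ⁻¹' U) := by
  let slice : ((x₀, ·) ⁻¹' U) → U := fun v => ⟨(x₀, v), v.2⟩
  have hslice : Continuous slice := by fun_prop
  exact catSet_iff_exists_paths.mpr ⟨x₀, fun v => (γ (slice v)).symm,
    Path.symm_continuous_family _ (hγ.comp (hslice.prodMap continuous_id))⟩

theorem exists_paths_of_catSet_prod [PathConnectedSpace X] {U : Set (X × X)} (hU : catSet U) :
    ∃ γ : ∀ u : U, Path (u : X × X).1 (u : X × X).2, Continuous ↿γ := by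
  obtain ⟨c, δ, hδ⟩ := catSet_iff_exists_paths.mp hU
  let link : Path c.1 c.2 := (PathConnectedSpace.joined c.1 c.2).somePath
  refine ⟨fun u => ((δ u).map continuous_fst).trans (link.trans ((δ u).map continuous_snd).symm),
    ?_⟩
  refine Path.trans_continuous_family _ (continuous_fst.comp hδ) _ ?_
  exact Path.trans_continuous_family _ (link.continuous.comp continuous_snd) _
    (Path.symm_continuous_family _ (continuous_snd.comp hδ))

theorem LScat_le_topC [Nonempty X] : LScat X ≤ topC X := by
  refine sInf_le_sInf ?_
  rintro _ ⟨m, rfl, U, hopen, hcov, hsec⟩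
  obtain ⟨x₀⟩ := ‹Nonempty X›
  refine ⟨m, rfl, fun i => (x₀, ·) ⁻¹' U i, fun i => (hopen i).preimage (by fun_prop), ?_,
    fun i => ?_⟩
  · rw [← Set.preimage_iUnion, hcov, Set.preimage_univ]
  · obtain ⟨γ, hγ⟩ := exists_section_iff_exists_paths.mp (hsec i)
    exact catSet_slice_of_paths x₀ hγ

theorem topC_le_LScat_prod [PathConnectedSpace X] : topC X ≤ LScat (X × X) := by
  refine sInf_le_sInf ?_
  rintro _ ⟨m, rfl, U, hopen, hcov, hcat⟩
  exact ⟨m, rfl, U, hopen, hcov,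
    fun i => exists_section_iff_exists_paths.mpr (exists_paths_of_catSet_prod (hcat i))⟩

end

/-- for a path-connected space `X`,
`cat(X) ≤ tc(X) ≤ cat(X × X)`; in particular `tc(X) ≤ 2 · cat(X)` whenever
`cat` satisfies the product inequality. -/
theorem LScat_le_topC_le_LScat_sq (X : Type*) [TopologicalSpace X]
    [PathConnectedSpace X] :
    LScat X ≤ topC X ∧ topC X ≤ LScat (X × X) ∧
    (LScat (X × X) ≤ LScat X + LScat X → topC X ≤ 2 * LScat X) := by
  refine ⟨LScat_le_topC, topC_le_LScat_prod, fun hprod => ?_⟩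
  calc topC X ≤ LScat (X × X) := topC_le_LScat_prod
    _ ≤ LScat X + LScat X := hprod
    _ = 2 * LScat X := (two_mul _).symm
end

section
/- If U ⊆ X × X is an open set whose inclusion into X × X is homotopic to the constant map at a point (x₀,x₀) on the diagonal, and X is path-connected, then the path fibration π : X^I → X×X admits a continuous section over U, provided the null-homotopy can be chosen; consequently tc(X) ≤ cat(X × X). -/
open scoped unitInterval

/-! A null-homotopy `H` of `U ⊆ X × X` moves each `u = (u₁, u₂)` to a fixed point `(a, b)`; its two
coordinate tracks are paths `u₁ ⇝ a` and `u₂ ⇝ b` depending continuously on `u`, so composing the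
first with a fixed path `a ⇝ b` and the reverse of the second gives a continuous choice of paths
`u₁ ⇝ u₂`. In a path-connected space any `a` and `b` are joined, so every categorical open set
carries such a section, whence `tc(X) ≤ cat(X × X)`. -/

theorem ContinuousMap.Homotopy.continuous_uncurry_evalAt {Y Z : Type*} [TopologicalSpace Y]
    [TopologicalSpace Z] {f g : C(Y, Z)} (H : f.Homotopy g) : Continuous ↿H.evalAt :=
  H.continuous.comp continuous_swap

theorem exists_section_of_homotopic_const {X : Type*} [TopologicalSpace X] {U : Set (X × X)}
    {a b : X} (hU : (⟨Subtype.val, continuous_subtype_val⟩ : C(U, X × X)).Homotopic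
      (ContinuousMap.const U (a, b))) (γ : Path a b) :
    ∃ s : C(U, C(I, X)), ∀ u : U, ((s u) 0, (s u) 1) = (u : X × X) := by
  obtain ⟨H⟩ := hU
  let δ (u : U) : Path (u : X × X).1 (u : X × X).2 :=
    (((H.evalAt u).map continuous_fst).trans γ).trans ((H.evalAt u).map continuous_snd).symm
  have hδ : Continuous ↿δ :=
    Path.trans_continuous_family _
      (Path.trans_continuous_family _ (continuous_fst.comp H.continuous_uncurry_evalAt) _
        (γ.continuous.comp continuous_snd)) _
      (Path.symm_continuous_family _ (continuous_snd.comp H.continuous_uncurry_evalAt))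
  exact ⟨ContinuousMap.curry ⟨↿δ, hδ⟩, fun u => Prod.ext (δ u).source (δ u).target⟩

theorem section_of_nullhomotopic_open_general (X : Type*) [TopologicalSpace X]
    [PathConnectedSpace X] (U : Set (X × X)) (x₀ : X)
    (hnull : (⟨Subtype.val, continuous_subtype_val⟩ : C(U, X × X)).Homotopic
      (ContinuousMap.const U (x₀, x₀))) :
    (∃ s : C(U, C(I, X)), ∀ u : U, ((s u) 0, (s u) 1) = (u : X × X)) ∧
    topC X ≤ LScat (X × X) := by
  refine ⟨exists_section_of_homotopic_const hnull (Path.refl x₀), sInf_le_sInf ?_⟩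
  rintro n ⟨m, rfl, V, hopen, hcover, hcat⟩
  refine ⟨m, rfl, V, hopen, hcover, fun i => ?_⟩
  obtain ⟨y, hy⟩ := hcat i
  exact exists_section_of_homotopic_const hy (PathConnectedSpace.somePath y.1 y.2)

/-- if `U ⊆ X × X` is open and its inclusion is homotopic to the
constant map at a diagonal point `(x₀, x₀)`, and `X` is path-connected, then the
path fibration `π : X^I → X × X` admits a continuous section over `U`;
consequently `tc(X) ≤ cat(X × X)`. -/
theorem section_of_nullhomotopic_open (X : Type*) [TopologicalSpace X]
    [PathConnectedSpace X] (U : Set (X × X)) (hU : IsOpen U) (x₀ : X)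
    (hnull : (⟨Subtype.val, continuous_subtype_val⟩ : C(U, X × X)).Homotopic
      (ContinuousMap.const U (x₀, x₀))) :
    (∃ s : C(U, C(I, X)), ∀ u : U, ((s u) 0, (s u) 1) = (u : X × X)) ∧
    topC X ≤ LScat (X × X) :=
  section_of_nullhomotopic_open_general X U x₀ hnull
end

section
/- (Product inequality for L-S category.) For normal (e.g. metrizable or CW) spaces X and Y, cat(X × Y) ≤ cat(X) + cat(Y). -/
/-!
Given open categorical covers `U₀, …, U_m` of `X` and `V₀, …, V_n` of `Y`, perfect normality gives
continuous `gᵢ ≥ 0` vanishing exactly off `Uᵢ`; put `sᵢ = g₀ + ⋯ + gᵢ₋₁`. For each `x` the intervals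
`(sᵢ x, sᵢ₊₁ x)` follow one another, the first nonempty one starts at `0`, and a nonempty one
forces `x ∈ Uᵢ`. Do the same with `tⱼ` on `Y`. The set `Oᵢⱼ` of points `(x, y)` whose `i`-th and
`j`-th intervals overlap is open and contained in `Uᵢ × Vⱼ`; these sets cover `X × Y`, and `Oᵢⱼ`,
`Oᵢ'ⱼ'` are disjoint when `i < i'` and `j' < j`, since the intervals are then ordered oppositely.
So `W_k = ⋃_{i+j=k} Oᵢⱼ`, `k = 0, …, m + n`, is a disjoint union of open categorical sets, hence
categorical: `X × Y` is path-connected, so all the contractions can end at one common point.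
-/

open Set Function Topology unitInterval

namespace ContinuousMap

variable {W Z : Type*} [TopologicalSpace W] [TopologicalSpace Z]

theorem Nullhomotopic.prodMk {Z' : Type*} [TopologicalSpace Z'] {f : C(W, Z)} {g : C(W, Z')}
    (hf : f.Nullhomotopic) (hg : g.Nullhomotopic) : (f.prodMk g).Nullhomotopic := by
  obtain ⟨z, ⟨F⟩⟩ := hf
  obtain ⟨z', ⟨G⟩⟩ := hg
  exact ⟨(z, z'), ⟨F.prod G⟩⟩

theorem Nullhomotopic.homotopic_const [PathConnectedSpace Z] {f : C(W, Z)}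
    (hf : f.Nullhomotopic) (z : Z) : f.Homotopic (const W z) :=
  let ⟨y, hy⟩ := hf
  hy.trans ⟨(PathConnectedSpace.somePath y z).toHomotopyConst⟩

theorem nullhomotopic_of_restrict_of_pairwise_disjoint [PathConnectedSpace Z] {ι : Type*}
    {S : ι → Set W} (hSo : ∀ i, IsOpen (S i)) (hSd : Pairwise (Disjoint on S)) (hS : ⋃ i, S i = univ)
    (f : C(W, Z)) (hf : ∀ i, (f.restrict (S i)).Nullhomotopic) : f.Nullhomotopic := by
  obtain ⟨z⟩ := PathConnectedSpace.nonempty (X := Z)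
  have H i := ((hf i).homotopic_const z).some
  let T i : Set (I × W) := Prod.snd ⁻¹' S i
  let φ i : C(T i, Z) := (H i).toContinuousMap.comp
    ⟨fun p => (p.1.1, ⟨p.1.2, p.2⟩), by fun_prop⟩
  have hφ i j (p : I × W) (hpi : p ∈ T i) (hpj : p ∈ T j) : φ i ⟨p, hpi⟩ = φ j ⟨p, hpj⟩ := by
    obtain rfl | hij := eq_or_ne i j
    · rfl
    · exact (disjoint_left.1 (hSd hij) hpi hpj).elim
  have hT (p : I × W) : ∃ i, T i ∈ 𝓝 p := by
    obtain ⟨i, hi⟩ := mem_iUnion.1 (hS ▸ mem_univ p.2)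
    exact ⟨i, ((hSo i).preimage continuous_snd).mem_nhds hi⟩
  have liftCover_eq (t : I) (w : W) :
      ∃ i, ∃ hw : w ∈ S i, liftCover T φ hφ hT (t, w) = H i (t, ⟨w, hw⟩) := by
    obtain ⟨i, hi⟩ := mem_iUnion.1 (hS ▸ mem_univ w)
    exact ⟨i, hi, liftCover_coe (⟨(t, w), hi⟩ : T i)⟩
  refine ⟨z, ⟨{ toContinuousMap := liftCover T φ hφ hT
                map_zero_left := fun w => ?_
                map_one_left := fun w => ?_ }⟩⟩
  · obtain ⟨i, _, h⟩ := liftCover_eq 0 w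
    exact h.trans ((H i).apply_zero _)
  · obtain ⟨i, _, h⟩ := liftCover_eq 1 w
    exact h.trans ((H i).apply_one _)

end ContinuousMap

section catSet

variable {X Y : Type*} [TopologicalSpace X] [TopologicalSpace Y]

theorem catSet_of_subset {U V : Set X} (hVU : V ⊆ U) (hU : catSet U) : catSet V :=
  hU.comp_left ⟨inclusion hVU, continuous_inclusion hVU⟩

theorem catSet_prod {U : Set X} {V : Set Y} (hU : catSet U) (hV : catSet V) :
    catSet (U ×ˢ V) :=
  (hU.comp_left ⟨fun z : ↥(U ×ˢ V) => ⟨z.1.1, z.2.1⟩, by fun_prop⟩).prodMk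
    (hV.comp_left ⟨fun z : ↥(U ×ˢ V) => ⟨z.1.2, z.2.2⟩, by fun_prop⟩)

theorem catSet_iUnion_of_pairwise_disjoint [PathConnectedSpace X] {ι : Type*} {U : ι → Set X}
    (hUo : ∀ i, IsOpen (U i)) (hUd : Pairwise (Disjoint on U)) (hU : ∀ i, catSet (U i)) :
    catSet (⋃ i, U i) :=
  ContinuousMap.nullhomotopic_of_restrict_of_pairwise_disjoint (S := fun i => Subtype.val ⁻¹' U i)
    (fun i => (hUo i).preimage continuous_subtype_val) (fun _ _ hij => (hUd hij).preimage _)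
    (by simp [← preimage_iUnion]) _
    fun i => (hU i).comp_left
      ⟨fun w : ↥(Subtype.val ⁻¹' U i : Set ↥(⋃ i, U i)) => ⟨w.1.1, w.2⟩, by fun_prop⟩

def IsCategoricalCover {ι : Type*} (U : ι → Set X) : Prop :=
  (∀ i, IsOpen (U i)) ∧ (⋃ i, U i) = univ ∧ ∀ i, catSet (U i)

end catSet

section Staircase

variable {X Y : Type*} [TopologicalSpace X] [TopologicalSpace Y]

structure Staircase {ι : Type*} [LinearOrder ι] (U : ι → Set X) where
  left : ι → X → ℝ
  right : ι → X → ℝ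
  continuous_left (i : ι) : Continuous (left i)
  continuous_right (i : ι) : Continuous (right i)
  mem_of_left_lt_right {i : ι} {x : X} : left i x < right i x → x ∈ U i
  right_le_left {i j : ι} (x : X) : i < j → right i x ≤ left j x
  exists_left_eq_zero (x : X) : ∃ i, left i x = 0 ∧ 0 < right i x

theorem IsOpen.exists_continuous_nonneg_pos_iff_mem [PerfectlyNormalSpace X] {U : Set X}
    (hU : IsOpen U) : ∃ g : C(X, ℝ), ∀ x, 0 ≤ g x ∧ (0 < g x ↔ x ∈ U) := by
  obtain ⟨g, hg0, hg⟩ :=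
    perfectlyNormalSpace_iff_forall_isClosed_preimage_zero.1 ‹_› _ hU.isClosed_compl
  refine ⟨g, fun x => ⟨(hg x).1, ?_⟩⟩
  rw [(hg x).1.lt_iff_ne', ← not_iff_not, not_not, ← mem_compl_iff, hg0]
  rfl

theorem nonempty_staircase [PerfectlyNormalSpace X] {ι : Type*} [Fintype ι] [LinearOrder ι]
    {U : ι → Set X} (hUo : ∀ i, IsOpen (U i)) (hU : ⋃ i, U i = univ) :
    Nonempty (Staircase U) := by
  classical
  choose g hg using fun i => (hUo i).exists_continuous_nonneg_pos_iff_mem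
  let left (i : ι) (x : X) : ℝ := ∑ l with l < i, g l x
  refine ⟨{
    left := left
    right := fun i x => left i x + g i x
    continuous_left := fun i => continuous_finsetSum _ fun l _ => (g l).continuous
    continuous_right := fun i =>
      (continuous_finsetSum _ fun l _ => (g l).continuous).add (g i).continuous
    mem_of_left_lt_right := fun h => (hg _ _).2.1 (lt_add_iff_pos_right _ |>.1 h)
    right_le_left := fun {i j} x hij => ?_
    exists_left_eq_zero := fun x => ?_ }⟩
  · have hi : i ∉ Finset.univ.filter (· < i) := by simp
    change ∑ l with l < i, g l x + g i x ≤ ∑ l with l < j, g l x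
    rw [add_comm, ← Finset.sum_insert (f := fun l => g l x) hi]
    refine Finset.sum_le_sum_of_subset_of_nonneg ?_ fun l _ _ => (hg l x).1
    intro l
    simp only [Finset.mem_insert, Finset.mem_filter, Finset.mem_univ, true_and]
    rintro (rfl | hl)
    exacts [hij, hl.trans hij]
  · obtain ⟨i, hi, hmin⟩ := exists_minimal_of_wellFoundedLT (fun i => x ∈ U i)
      (mem_iUnion.1 (hU ▸ mem_univ x))
    have hleft : left i x = 0 := Finset.sum_eq_zero fun l hl => by
      have hli : l < i := (Finset.mem_filter.1 hl).2
      have hlU : x ∉ U l := fun hxl => hli.not_ge (hmin hxl hli.le)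
      exact le_antisymm (not_lt.1 (mt (hg l x).2.1 hlU)) (hg l x).1
    exact ⟨i, hleft, by rw [hleft, zero_add]; exact (hg i x).2.2 hi⟩

namespace Staircase

variable {ι κ : Type*} [LinearOrder ι] [LinearOrder κ] {U : ι → Set X} {V : κ → Set Y}
  (S : Staircase U) (T : Staircase V)

def overlap (p : ι × κ) : Set (X × Y) :=
  {z | max (S.left p.1 z.1) (T.left p.2 z.2) < min (S.right p.1 z.1) (T.right p.2 z.2)}

theorem mem_overlap {p : ι × κ} {z : X × Y} : z ∈ S.overlap T p ↔
    max (S.left p.1 z.1) (T.left p.2 z.2) < min (S.right p.1 z.1) (T.right p.2 z.2) :=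
  Iff.rfl

theorem isOpen_overlap (p : ι × κ) : IsOpen (S.overlap T p) :=
  isOpen_lt
    (((S.continuous_left _).comp continuous_fst).max ((T.continuous_left _).comp continuous_snd))
    (((S.continuous_right _).comp continuous_fst).min ((T.continuous_right _).comp continuous_snd))

theorem overlap_subset_prod (p : ι × κ) : S.overlap T p ⊆ U p.1 ×ˢ V p.2 := fun _ hz =>
  ⟨S.mem_of_left_lt_right ((le_max_left _ _).trans_lt (hz.trans_le (min_le_left _ _))),
    T.mem_of_left_lt_right ((le_max_right _ _).trans_lt (hz.trans_le (min_le_right _ _)))⟩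

theorem iUnion_overlap : ⋃ p, S.overlap T p = univ := by
  refine eq_univ_of_forall fun z => mem_iUnion.2 ?_
  obtain ⟨i, hi0, hi⟩ := S.exists_left_eq_zero z.1
  obtain ⟨j, hj0, hj⟩ := T.exists_left_eq_zero z.2
  refine ⟨(i, j), ?_⟩
  rw [mem_overlap, hi0, hj0, max_self]
  exact lt_min hi hj

theorem disjoint_overlap {p q : ι × κ} (h₁ : p.1 < q.1) (h₂ : q.2 < p.2) :
    Disjoint (S.overlap T p) (S.overlap T q) := by
  refine disjoint_left.2 fun z hp hq => ?_
  rw [mem_overlap, max_lt_iff, lt_min_iff, lt_min_iff] at hp hq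
  linarith [S.right_le_left z.1 h₁, T.right_le_left z.2 h₂]

theorem pairwiseDisjoint_overlap {A : Set (ι × κ)} (hA : IsAntichain (· ≤ ·) A) :
    A.PairwiseDisjoint (S.overlap T) := by
  intro p hp q hq hpq
  have hpq' : ¬ p ≤ q := hA hp hq hpq
  have hqp : ¬ q ≤ p := hA hq hp hpq.symm
  simp only [Prod.le_def, not_and_or, not_le] at hpq' hqp
  rcases lt_trichotomy p.1 q.1 with h | h | h
  · exact S.disjoint_overlap T h (hpq'.resolve_left h.not_gt)
  · rw [h, lt_self_iff_false, false_or] at hpq' hqp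
    exact absurd hpq' hqp.not_gt
  · exact (S.disjoint_overlap T h (hqp.resolve_left h.not_gt)).symm

end Staircase

end Staircase

theorem isAntichain_setOf_val_add_val_eq {m n : ℕ} (k : ℕ) :
    IsAntichain (· ≤ ·) {p : Fin (m + 1) × Fin (n + 1) | (p.1 : ℕ) + p.2 = k} := by
  rintro p (hp : (p.1 : ℕ) + p.2 = k) q (hq : (q.1 : ℕ) + q.2 = k) hpq ⟨h₁, h₂⟩
  rw [Fin.le_def] at h₁ h₂
  exact hpq (Prod.ext (Fin.ext (by omega)) (Fin.ext (by omega)))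

theorem IsCategoricalCover.prod {X Y : Type*} [TopologicalSpace X] [TopologicalSpace Y]
    [PerfectlyNormalSpace X] [PerfectlyNormalSpace Y] [PathConnectedSpace X]
    [PathConnectedSpace Y] {m n : ℕ} {U : Fin (m + 1) → Set X} {V : Fin (n + 1) → Set Y}
    (hU : IsCategoricalCover U) (hV : IsCategoricalCover V) :
    ∃ W : Fin (m + n + 1) → Set (X × Y), IsCategoricalCover W := by
  obtain ⟨hUo, hUc, hUcat⟩ := hU
  obtain ⟨hVo, hVc, hVcat⟩ := hV
  obtain ⟨S⟩ := nonempty_staircase hUo hUc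
  obtain ⟨T⟩ := nonempty_staircase hVo hVc
  let A (k : Fin (m + n + 1)) := {p : Fin (m + 1) × Fin (n + 1) | (p.1 : ℕ) + p.2 = k}
  refine ⟨fun k => ⋃ p : A k, S.overlap T p,
    fun k => isOpen_iUnion fun p => S.isOpen_overlap T p, eq_univ_of_forall fun z => ?_,
    fun k => ?_⟩
  · obtain ⟨p, hp⟩ := mem_iUnion.1 (S.iUnion_overlap T ▸ mem_univ z)
    exact mem_iUnion.2 ⟨⟨p.1 + p.2, by omega⟩, mem_iUnion.2 ⟨⟨p, rfl⟩, hp⟩⟩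
  · refine catSet_iUnion_of_pairwise_disjoint (fun p => S.isOpen_overlap T p)
      (fun p q hpq => S.pairwiseDisjoint_overlap T (isAntichain_setOf_val_add_val_eq k) p.2 q.2
        (Subtype.coe_ne_coe.2 hpq)) fun p => ?_
    exact catSet_of_subset (S.overlap_subset_prod T p) (catSet_prod (hUcat _) (hVcat _))

theorem LScat_eq_sInf (X : Type*) [TopologicalSpace X] : LScat X =
    sInf {n : ℕ∞ | ∃ m : ℕ, n = m ∧ ∃ U : Fin (m + 1) → Set X, IsCategoricalCover U} :=
  rfl

theorem LScat_le_of_isCategoricalCover {X : Type*} [TopologicalSpace X] {m : ℕ}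
    {U : Fin (m + 1) → Set X} (hU : IsCategoricalCover U) : LScat X ≤ m :=
  sInf_le ⟨m, rfl, U, hU⟩

theorem exists_isCategoricalCover_of_LScat_eq {X : Type*} [TopologicalSpace X] {m : ℕ}
    (h : LScat X = m) : ∃ U : Fin (m + 1) → Set X, IsCategoricalCover U := by
  rw [LScat_eq_sInf] at h
  have hne :
      {n : ℕ∞ | ∃ m : ℕ, n = m ∧ ∃ U : Fin (m + 1) → Set X, IsCategoricalCover U}.Nonempty :=
    nonempty_iff_ne_empty.2 fun he => by simp [he] at h
  obtain ⟨m', hm', hU⟩ := csInf_mem hne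
  rw [h, Nat.cast_inj] at hm'
  exact hm' ▸ hU

/-- product inequality: for (path-connected) metrizable — in
particular normal — spaces `X` and `Y`, `cat(X × Y) ≤ cat(X) + cat(Y)`. -/
theorem LScat_prod_le {X Y : Type*} [TopologicalSpace X] [TopologicalSpace Y]
    [TopologicalSpace.MetrizableSpace X] [TopologicalSpace.MetrizableSpace Y]
    [PathConnectedSpace X] [PathConnectedSpace Y] :
    LScat (X × Y) ≤ LScat X + LScat Y := by
  by_cases hX : LScat X = ⊤
  · simp [hX]
  by_cases hY : LScat Y = ⊤
  · simp [hY]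
  obtain ⟨m, hm⟩ := ENat.ne_top_iff_exists.1 hX
  obtain ⟨n, hn⟩ := ENat.ne_top_iff_exists.1 hY
  obtain ⟨U, hU⟩ := exists_isCategoricalCover_of_LScat_eq hm.symm
  obtain ⟨V, hV⟩ := exists_isCategoricalCover_of_LScat_eq hn.symm
  obtain ⟨W, hW⟩ := hU.prod hV
  rw [← hm, ← hn]
  exact_mod_cast LScat_le_of_isCategoricalCover hW
end

section
/- (Whitehead-type upper bound.) If the diagonal map Δ^{n+1} : X → X^{n+1} is homotopic to a map with image in the fat wedge T^{n+1}X = {(x₁,…,x_{n+1}) ∈ X^{n+1} : xᵢ = * for some i}, and X is a normal space in which the basepoint has a categorical open neighborhood (e.g. X a connected CW complex), then cat(X) ≤ n. -/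
/-- The fat wedge `Tⁿ X = {x ∈ Xⁿ : xᵢ = * for some i}`. -/
def fatWedge {X : Type*} (x₀ : X) (n : ℕ) : Set (Fin n → X) := {x | ∃ i, x i = x₀}

/-!
Each coordinate `gᵢ : X → X` of a deformation `g` of the diagonal is homotopic to the identity,
so the preimage `gᵢ⁻¹(N)` of a categorical neighbourhood `N` of the basepoint is categorical:
its inclusion is homotopic to `gᵢ` restricted to it, which factors through `N ↪ X`.
Since `g` lands in the fat wedge, some coordinate of `g x` is the basepoint for every `x`,
so these `n + 1` open sets cover `X`.
-/

open ContinuousMap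

theorem LScat_le_of_cover {X : Type*} [TopologicalSpace X] {m : ℕ} (U : Fin (m + 1) → Set X)
    (hopen : ∀ i, IsOpen (U i)) (hcover : ⋃ i, U i = Set.univ) (hcat : ∀ i, catSet (U i)) :
    LScat X ≤ m :=
  sInf_le ⟨m, rfl, U, hopen, hcover, hcat⟩

theorem catSet_preimage_of_homotopic_id {X : Type*} [TopologicalSpace X] {f : C(X, X)}
    (hf : f.Homotopic (ContinuousMap.id X)) {N : Set X} (hN : catSet N) :
    catSet (f ⁻¹' N) := by
  obtain ⟨c, hc⟩ := hN
  refine ⟨c, Homotopic.trans ?_ (hc.comp (Homotopic.refl (f.restrictPreimage N)))⟩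
  exact (hf.comp (Homotopic.refl ⟨Subtype.val, continuous_subtype_val⟩)).symm

theorem eval_comp_homotopic_id_of_diagonal_homotopic {X ι : Type*} [TopologicalSpace X]
    {g : C(X, ι → X)} (hg : (⟨fun x _ => x, continuous_pi fun _ => continuous_id⟩ :
      C(X, ι → X)).Homotopic g) (i : ι) :
    ((eval i).comp g).Homotopic (ContinuousMap.id X) :=
  ((Homotopic.refl (eval i)).comp hg).symm

theorem whitehead_upper_bound_general {X : Type*} [TopologicalSpace X]
    (x₀ : X) (n : ℕ) (N : Set X) (hNopen : IsOpen N) (hx₀N : x₀ ∈ N)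
    (hNcat : catSet N) (g : C(X, Fin (n + 1) → X))
    (hg : (⟨fun x _ => x, continuous_pi fun _ => continuous_id⟩ :
        C(X, Fin (n + 1) → X)).Homotopic g)
    (him : ∀ x, g x ∈ fatWedge x₀ (n + 1)) :
    LScat X ≤ n := by
  refine LScat_le_of_cover (fun i => (eval i).comp g ⁻¹' N)
    (fun i => hNopen.preimage (map_continuous _)) ?_
    fun i => catSet_preimage_of_homotopic_id
      (eval_comp_homotopic_id_of_diagonal_homotopic hg i) hNcat
  refine Set.eq_univ_of_forall fun x => ?_
  obtain ⟨i, hi⟩ := him x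
  exact Set.mem_iUnion.2 ⟨i, show g x i ∈ N from hi ▸ hx₀N⟩

/-- Whitehead-type upper bound: if the `(n+1)`-fold diagonal
`Δ^{n+1} : X → X^{n+1}` is homotopic to a map `g` with image in the fat wedge
`T^{n+1}X`, and `X` is a normal space in which the basepoint has a categorical
open neighborhood, then `cat X ≤ n`. -/
theorem whitehead_upper_bound {X : Type*} [TopologicalSpace X] [NormalSpace X]
    (x₀ : X) (n : ℕ) (N : Set X) (hNopen : IsOpen N) (hx₀N : x₀ ∈ N)
    (hNcat : catSet N) (g : C(X, Fin (n + 1) → X))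
    (hg : (⟨fun x _ => x, continuous_pi fun _ => continuous_id⟩ :
        C(X, Fin (n + 1) → X)).Homotopic g)
    (him : ∀ x, g x ∈ fatWedge x₀ (n + 1)) :
    LScat X ≤ n :=
  whitehead_upper_bound_general x₀ n N hNopen hx₀N hNcat g hg him
end
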